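/- In the special case of the previous setup, for all n \ge 2: \sum_{k=1}^n \lambda_k(n-1) B_{n,k}(x_1, x_2, ..., x_{n-k+1}) = 0. -/

import Mathlib

open PowerSeries Finset
noncomputable section

/-- Coefficient-wise composition `f ∘ g` of formal power series; this agrees with the
usual composition when `g` has zero constant term. -/
def scomp (f g : PowerSeries ℂ) : PowerSeries ℂ :=
  PowerSeries.mk fun N => ∑ n ∈ Finset.range (N + 1),
    (PowerSeries.coeff (R := ℂ) n f) * (PowerSeries.coeff (R := ℂ) N (g ^ n))

/-- The exponential series `∑ t^n/n!`. -/
def expS : PowerSeries ℂ := PowerSeries.mk fun n => 1 / (n.factorial : ℂ)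

/-- The series `log(1+t) = ∑_{n≥1} (-1)^{n+1} t^n / n`. -/
def logS : PowerSeries ℂ := PowerSeries.mk fun n => if n = 0 then 0 else (-1) ^ (n + 1) / (n : ℂ)

/-- Complex power `φ^q := exp (q · log φ)`, well defined when `φ` has constant term 1. -/
def cpow (φ : PowerSeries ℂ) (q : ℂ) : PowerSeries ℂ :=
  scomp expS (q • scomp logS (φ - 1))

/-- Formal derivative. -/
def D (f : PowerSeries ℂ) : PowerSeries ℂ :=
  PowerSeries.mk fun n => ((n + 1 : ℕ) : ℂ) * PowerSeries.coeff (R := ℂ) (n + 1) f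

/-- Generalized binomial coefficient `binom(t, k) = t(t-1)⋯(t-k+1)/k!`. -/
def gbinom (t : ℂ) (k : ℕ) : ℂ := (∏ j ∈ Finset.range k, (t - j)) / (k.factorial : ℂ)

/-- The ordinary Bell polynomial `B_{n,k}(x_1, …, x_{n-k+1})`. -/
def ordBell (n k : ℕ) (x : ℕ → ℂ) : ℂ :=
  ∑ i : Fin (n - k + 1) → Fin (n + 1),
    if (∑ j, (i j : ℕ)) = k ∧ (∑ j, (j.1 + 1) * (i j : ℕ)) = n then
      ((k.factorial : ℂ) / ∏ j, ((i j : ℕ).factorial : ℂ)) * ∏ j, x (j.1 + 1) ^ (i j : ℕ)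
    else 0

/-!
Comparing coefficients of `t^n` in the defining relation of `λ` at `s = n - 1` gives
`∑_k λ_k(n-1) [t^n] F^k = binom(n-1, n) = 0`, so it remains to identify `[t^n] F^k` with
`B_{n,k}`.

The series `E = exp (s · log (1 + t))` is identified with the binomial series through the
differential equation `(1 + t) E' = s E`, `E(0) = 1`, whose coefficient recursion is that of
`binom(s, n)`. For `[t^n] F^k` only `x_1, …, x_{n-k+1}` matter: `F^k ≡ P^k mod t^{n+1}` for the
truncation `P` of `F` at degree `n - k + 1`, because `F - P` is divisible by `t^{n-k+2}` and
`F`, `P` by `t`. The multinomial theorem then expands `P^k` into exactly the sum defining `B_{n,k}`.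
-/
lemma coeff_scomp (f g : PowerSeries ℂ) (N : ℕ) :
    coeff N (scomp f g) = ∑ n ∈ range (N + 1), coeff n f * coeff N (g ^ n) :=
  coeff_mk _ _

lemma coeff_pow_eq_zero_of_lt {R : Type*} [CommSemiring R] {g : PowerSeries R}
    (hg : constantCoeff g = 0) {N n : ℕ} (h : N < n) :
    coeff N (g ^ n) = 0 :=
  X_pow_dvd_iff.1 (pow_dvd_pow_of_dvd (X_dvd_iff.2 hg) n) N h

lemma coeff_scomp_eq_sum_range {g : PowerSeries ℂ} (hg : constantCoeff g = 0)
    (f : PowerSeries ℂ) {N M : ℕ} (hNM : N < M) :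
    coeff N (scomp f g) = ∑ n ∈ range M, coeff n f * coeff N (g ^ n) := by
  rw [coeff_scomp]
  refine sum_subset (range_subset_range.2 hNM) fun n _ hnN => ?_
  rw [coeff_pow_eq_zero_of_lt hg (by simpa using hnN), mul_zero]

lemma constantCoeff_scomp (f g : PowerSeries ℂ) :
    constantCoeff (scomp f g) = constantCoeff f := by
  rw [← coeff_zero_eq_constantCoeff_apply, ← coeff_zero_eq_constantCoeff_apply, coeff_scomp]
  simp

lemma scomp_X (f : PowerSeries ℂ) : scomp f X = f := by
  ext N
  rw [coeff_scomp, sum_eq_single_of_mem N (self_mem_range_succ N)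
    fun n _ hn => by rw [coeff_X_pow, if_neg (Ne.symm hn), mul_zero], coeff_X_pow_self, mul_one]

theorem derivative_scomp (f : PowerSeries ℂ) {g : PowerSeries ℂ} (hg : constantCoeff g = 0) :
    d⁄dX ℂ (scomp f g) = scomp (d⁄dX ℂ f) g * d⁄dX ℂ g := by
  ext N
  calc coeff N (d⁄dX ℂ (scomp f g))
      = ∑ n ∈ range (N + 2), coeff n f * coeff N (d⁄dX ℂ (g ^ n)) := by
        simp only [coeff_derivative, coeff_scomp, sum_mul, mul_assoc]
    _ = ∑ k ∈ range (N + 1), coeff k (d⁄dX ℂ f) * coeff N (g ^ k * d⁄dX ℂ g) := by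
        rw [sum_range_succ', pow_zero, derivative_one, map_zero, mul_zero, add_zero]
        refine sum_congr rfl fun k _ => ?_
        rw [derivative_pow, coeff_derivative, add_tsub_cancel_right, ← map_natCast (C (R := ℂ)),
          mul_assoc, coeff_C_mul]
        push_cast
        ring
    _ = coeff N (scomp (d⁄dX ℂ f) g * d⁄dX ℂ g) := by
        symm
        rw [coeff_mul, sum_congr rfl fun p hp => by
          rw [coeff_scomp_eq_sum_range hg _ (M := N + 1) (by simp at hp; omega), sum_mul],
          sum_comm]
        simp only [mul_assoc, ← mul_sum, ← coeff_mul]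

lemma derivative_expS : d⁄dX ℂ expS = expS := by
  ext n
  simp only [expS, coeff_derivative, coeff_mk, Nat.factorial_succ]
  push_cast
  field_simp

lemma constantCoeff_logS : constantCoeff logS = 0 := by
  simp [logS, ← coeff_zero_eq_constantCoeff_apply]

lemma one_add_X_mul_derivative_logS : (1 + X) * d⁄dX ℂ logS = 1 := by
  have hcoeff (n : ℕ) : coeff n (d⁄dX ℂ logS) = (-1) ^ n := by
    simp only [logS, coeff_derivative, coeff_mk, Nat.succ_ne_zero, if_false]
    push_cast
    field_simp
    ring
  ext (_ | n)
  · simp only [add_mul, one_mul, map_add, coeff_zero_X_mul, hcoeff, coeff_one]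
    simp
  · simp [add_mul, coeff_succ_X_mul, hcoeff, pow_succ]

lemma coeff_one_add_X_mul_derivative (E : PowerSeries ℂ) (n : ℕ) :
    coeff n ((1 + X) * d⁄dX ℂ E) = coeff (n + 1) E * (n + 1) + n * coeff n E := by
  rcases n with _ | n
  · simp only [add_mul, one_mul, map_add, coeff_zero_X_mul, coeff_derivative]
    simp
  · rw [add_mul, one_mul, map_add, coeff_succ_X_mul, coeff_derivative, coeff_derivative]
    push_cast
    ring

lemma gbinom_succ_mul (s : ℂ) (n : ℕ) : gbinom s (n + 1) * (n + 1) = (s - n) * gbinom s n := by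
  rw [gbinom, gbinom, prod_range_succ, Nat.factorial_succ]
  push_cast
  field_simp

lemma coeff_eq_gbinom_of_one_add_X_mul_derivative {E : PowerSeries ℂ} {s : ℂ}
    (hE : (1 + X) * d⁄dX ℂ E = s • E) (h0 : constantCoeff E = 1) (n : ℕ) :
    coeff n E = gbinom s n := by
  induction n with
  | zero => simp [h0, gbinom]
  | succ n ih =>
    have hrec := coeff_one_add_X_mul_derivative E n
    rw [hE, map_smul, smul_eq_mul, ih] at hrec
    refine mul_right_cancel₀ (Nat.cast_add_one_ne_zero n) ?_
    rw [gbinom_succ_mul]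
    linear_combination -hrec

lemma cpow_one_add_X (s : ℂ) : cpow (1 + X) s = scomp expS (s • logS) := by
  rw [cpow, add_sub_cancel_left, scomp_X]

lemma one_add_X_mul_derivative_cpow (s : ℂ) :
    (1 + X) * d⁄dX ℂ (cpow (1 + X) s) = s • cpow (1 + X) s := by
  rw [cpow_one_add_X, derivative_scomp _ (by simp [constantCoeff_logS]), derivative_expS,
    Derivation.map_smul, mul_smul_comm, mul_smul_comm, mul_left_comm,
    one_add_X_mul_derivative_logS, mul_one]

lemma constantCoeff_cpow (φ : PowerSeries ℂ) (s : ℂ) : constantCoeff (cpow φ s) = 1 := by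
  rw [cpow, constantCoeff_scomp, ← coeff_zero_eq_constantCoeff_apply]
  simp [expS]

lemma coeff_cpow_one_add_X (s : ℂ) (n : ℕ) : coeff n (cpow (1 + X) s) = gbinom s n :=
  coeff_eq_gbinom_of_one_add_X_mul_derivative (one_add_X_mul_derivative_cpow s)
    (constantCoeff_cpow _ s) n

lemma gbinom_natCast_sub_one_self {n : ℕ} (hn : 1 ≤ n) : gbinom ((n : ℂ) - 1) n = 0 := by
  rw [gbinom, prod_eq_zero (mem_range.2 (Nat.sub_lt hn one_pos)) (by push_cast [hn]; ring),
    zero_div]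

theorem pow_succ_sub_pow_succ_dvd {R : Type*} [CommRing R] {d f g : R} {a : ℕ}
    (h : d ^ a ∣ f - g) (hf : d ∣ f) (hg : d ∣ g) (k : ℕ) :
    d ^ (a + k) ∣ f ^ (k + 1) - g ^ (k + 1) := by
  induction k with
  | zero => simpa using h
  | succ k ih =>
    have hsplit : f ^ (k + 2) - g ^ (k + 2) =
        f * (f ^ (k + 1) - g ^ (k + 1)) + (f - g) * g ^ (k + 1) := by
      ring
    refine hsplit ▸ dvd_add ?_ ?_
    · rw [← add_assoc, pow_succ']
      exact mul_dvd_mul hf ih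
    · rw [pow_add]
      exact mul_dvd_mul h (pow_dvd_pow_of_dvd hg _)

theorem coeff_sum_C_mul_X_pow_pow {R ι : Type*} [CommSemiring R] [Fintype ι] [DecidableEq ι]
    (c : ι → R) (w : ι → ℕ) (k n : ℕ) :
    coeff n ((∑ i, C (c i) * X ^ w i) ^ k) =
      ∑ g ∈ (piAntidiag univ k).filter (fun g => ∑ i, w i * g i = n),
        (Nat.multinomial univ g : R) * ∏ i, c i ^ g i := by
  rw [sum_pow_eq_sum_piAntidiag, map_sum, sum_filter]
  refine sum_congr rfl fun g _ => ?_
  have hprod :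
      ∏ i, (C (c i) * X ^ w i) ^ g i = C (∏ i, c i ^ g i) * X ^ (∑ i, w i * g i) := by
    simp only [mul_pow, prod_mul_distrib, map_prod, map_pow, ← pow_mul, prod_pow_eq_pow_sum]
  rw [hprod, ← map_natCast (C (R := R)), ← mul_assoc, ← map_mul, coeff_C_mul_X_pow]
  simp only [eq_comm]

lemma natCast_multinomial {K ι : Type*} [Field K] [CharZero K] (s : Finset ι) (g : ι → ℕ) :
    (Nat.multinomial s g : K) =
      (∑ i ∈ s, g i).factorial / ∏ i ∈ s, ((g i).factorial : K) := by
  rw [eq_div_iff (prod_ne_zero_iff.2 fun i _ => Nat.cast_ne_zero.2 (Nat.factorial_ne_zero _)),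
    mul_comm]
  exact_mod_cast Nat.multinomial_spec s g

lemma ordBell_eq_sum_piAntidiag {n k : ℕ} (hkn : k ≤ n) (x : ℕ → ℂ) :
    ordBell n k x =
      ∑ g ∈ (piAntidiag (univ : Finset (Fin (n - k + 1))) k).filter
          (fun g => ∑ j, (j.1 + 1) * g j = n),
        (Nat.multinomial univ g : ℂ) * ∏ j, x (j.1 + 1) ^ g j := by
  rw [ordBell, ← sum_filter]
  have hle {g : Fin (n - k + 1) → ℕ} (hg : ∑ j, g j = k) (j : Fin (n - k + 1)) :
      g j < n + 1 :=
    Nat.lt_succ_of_le (hg ▸ single_le_sum (fun _ _ => Nat.zero_le _) (mem_univ j) |>.trans hkn)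
  refine sum_bij' (fun i _ j => (i j : ℕ))
    (fun g hg j => ⟨g j, hle (mem_piAntidiag.1 (mem_filter.1 hg).1).1 j⟩)
    (fun i hi => by simpa using hi) (fun g hg => by simpa using hg) (fun _ _ => rfl)
    (fun _ _ => rfl) fun i hi => ?_
  rw [natCast_multinomial, (mem_filter.1 hi).2.1]

theorem coeff_pow_eq_ordBell (x : ℕ → ℂ) {n k : ℕ} (hk : 1 ≤ k) (hkn : k ≤ n) :
    coeff n ((mk fun j => if j = 0 then 0 else x j) ^ k) = ordBell n k x := by
  set F : PowerSeries ℂ := mk fun j => if j = 0 then 0 else x j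
  set P : PowerSeries ℂ := ∑ j : Fin (n - k + 1), C (x (j.1 + 1)) * X ^ (j.1 + 1)
  have hF : X ∣ F := X_dvd_iff.2 (by simp [F, ← coeff_zero_eq_constantCoeff_apply])
  have hP : X ∣ P := dvd_sum fun j _ => (dvd_pow_self X j.1.succ_ne_zero).mul_left _
  have hFP : X ^ (n - k + 2) ∣ F - P := by
    refine X_pow_dvd_iff.2 fun m hm => ?_
    rcases m with _ | m
    · simp [F, P]
    · have hm' : m ∈ range (n - k + 1) := mem_range.2 (by omega)
      simp only [F, P, map_sub, map_sum, coeff_mk, coeff_C_mul, coeff_X_pow,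
        Nat.add_right_cancel_iff, mul_ite, mul_one, mul_zero, Nat.succ_ne_zero, if_false]
      rw [Fin.sum_univ_eq_sum_range (fun j => if m = j then x (j + 1) else 0), sum_ite_eq,
        if_pos hm', sub_self]
  obtain ⟨k, rfl⟩ := Nat.exists_eq_add_of_le' hk
  have hpow : coeff n (F ^ (k + 1)) = coeff n (P ^ (k + 1)) := by
    rw [← sub_eq_zero, ← map_sub]
    exact X_pow_dvd_iff.1 (pow_succ_sub_pow_succ_dvd hFP hF hP k) n (by omega)
  rw [hpow, coeff_sum_C_mul_X_pow_pow, ordBell_eq_sum_piAntidiag hkn]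

theorem stmt10_general (x : ℕ → ℂ)
    (F : PowerSeries ℂ) (hF : F = PowerSeries.mk fun n => if n = 0 then 0 else x n)
    (lam : ℕ → ℂ → ℂ)
    (hlam : ∀ (s : ℂ) (N : ℕ), PowerSeries.coeff (R := ℂ) N (cpow (1 + PowerSeries.X) s) =
      ∑ n ∈ Finset.range (N + 1), lam n s * PowerSeries.coeff (R := ℂ) N (F ^ n)) :
    ∀ n : ℕ, 2 ≤ n →
      ∑ k ∈ Finset.Icc 1 n, lam k ((n : ℂ) - 1) * ordBell n k x = 0 := by
  intro n hn
  have hcoeff := hlam ((n : ℂ) - 1) n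
  rw [coeff_cpow_one_add_X, gbinom_natCast_sub_one_self (by omega), sum_range_succ', pow_zero,
    coeff_one, if_neg (by omega), mul_zero, add_zero] at hcoeff
  rw [hcoeff, ← Ico_add_one_right_eq_Icc, sum_Ico_eq_sum_range, Nat.add_sub_cancel]
  refine sum_congr rfl fun k hk => ?_
  rw [hF, coeff_pow_eq_ordBell x (by omega) (by simp at hk; omega), add_comm]

/-- For `x_n = (-1)^n ∑_i a_i binom(n-1+q_i, n)` and `λ_n(s)` defined by
`(1+t)^s = 1 + ∑_{n≥1} λ_n(s) (∑_k x_k t^k)^n`, one has, for `n ≥ 2`,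
`∑_{k=1}^n λ_k(n-1) B_{n,k}(x_1, …, x_{n-k+1}) = 0`. -/
theorem stmt10 (m : ℕ) (hm : 1 ≤ m) (a q : ℕ → ℂ)
    (hsum : ∑ i ∈ Finset.Icc 1 m, a i = 0)
    (hc1 : ∑ i ∈ Finset.Icc 1 m, a i * q i ≠ 0)
    (x : ℕ → ℂ)
    (hx : ∀ n : ℕ, x n = (-1) ^ n * ∑ i ∈ Finset.Icc 1 m, a i * gbinom ((n : ℂ) - 1 + q i) n)
    (F : PowerSeries ℂ) (hF : F = PowerSeries.mk fun n => if n = 0 then 0 else x n)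
    (lam : ℕ → ℂ → ℂ) (hlam0 : ∀ s : ℂ, lam 0 s = 1)
    (hlam : ∀ (s : ℂ) (N : ℕ), PowerSeries.coeff (R := ℂ) N (cpow (1 + PowerSeries.X) s) =
      ∑ n ∈ Finset.range (N + 1), lam n s * PowerSeries.coeff (R := ℂ) N (F ^ n)) :
    ∀ n : ℕ, 2 ≤ n →
      ∑ k ∈ Finset.Icc 1 n, lam k ((n : ℂ) - 1) * ordBell n k x = 0 :=
  stmt10_general x F hF lam hlam
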